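/- For each λ ∈ [0,1] there exists a symmetric positive definite matrix P_λ ∈ ℝ^{2×2} such that A(λ)ᵀ P_λ + P_λ A(λ) = −I. -/

import Mathlib

/-!
For a `2 × 2` matrix `A` with `δ = det A`, Cayley–Hamilton gives `A + adj A = (tr A) • 1` and
`adj A * A = δ • 1`, from which `P₀ = δ • 1 + (adj A)ᵀ * adj A` satisfies
`Aᵀ P₀ + P₀ A = 2 (tr A) δ • 1`. When `δ > 0` the matrix `P₀` is positive definite, so for a
Hurwitz matrix (`tr A < 0 < δ`) the rescaling `P = -(2 (tr A) δ)⁻¹ • P₀` solves `Aᵀ P + P A = -1`.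
Every `A(λ)` has trace `-1/10`, and its determinant is positive for `λ ∈ [0, 1]`.
-/

open Matrix

namespace Matrix

variable {R : Type*} [CommRing R]

theorem add_adjugate_fin_two (A : Matrix (Fin 2) (Fin 2) R) : A + adjugate A = A.trace • 1 := by
  rw [adjugate_fin_two, trace_fin_two]
  ext i j
  fin_cases i <;> fin_cases j <;> simp [add_comm]

def lyapunovFinTwo (A : Matrix (Fin 2) (Fin 2) R) : Matrix (Fin 2) (Fin 2) R :=
  A.det • 1 + (adjugate A)ᵀ * adjugate A

theorem transpose_mul_lyapunovFinTwo_add (A : Matrix (Fin 2) (Fin 2) R) :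
    Aᵀ * lyapunovFinTwo A + lyapunovFinTwo A * A = (2 * A.trace * A.det) • 1 := by
  have hAB : Aᵀ * (adjugate A)ᵀ = A.det • 1 := by
    rw [← transpose_mul, adjugate_mul, transpose_smul, transpose_one]
  calc Aᵀ * lyapunovFinTwo A + lyapunovFinTwo A * A
      = A.det • (A + adjugate A) + A.det • (A + adjugate A)ᵀ := by
        simp only [lyapunovFinTwo, mul_add, add_mul, Matrix.mul_smul, Matrix.smul_mul,
          Matrix.mul_one, Matrix.one_mul, ← Matrix.mul_assoc, hAB, Matrix.mul_assoc _ _ A,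
          adjugate_mul, transpose_add, smul_add]
        abel
    _ = (2 * A.trace * A.det) • 1 := by
        rw [add_adjugate_fin_two, transpose_smul, transpose_one, smul_smul, ← add_smul]
        ring_nf

theorem posDef_lyapunovFinTwo {A : Matrix (Fin 2) (Fin 2) ℝ} (hdet : 0 < A.det) :
    (lyapunovFinTwo A).PosDef := by
  refine (PosDef.one.smul hdet).add_posSemidef ?_
  simpa [conjTranspose_eq_transpose_of_trivial] using posSemidef_conjTranspose_mul_self (adjugate A)

theorem exists_posDef_transpose_mul_add_mul_eq_neg_one_of_trace_neg_of_det_pos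
    {A : Matrix (Fin 2) (Fin 2) ℝ} (htr : A.trace < 0) (hdet : 0 < A.det) :
    ∃ P : Matrix (Fin 2) (Fin 2) ℝ, P.IsSymm ∧ P.PosDef ∧ Aᵀ * P + P * A = -1 := by
  have hneg : 2 * A.trace * A.det < 0 := mul_neg_of_neg_of_pos (by linarith) hdet
  have hP := (posDef_lyapunovFinTwo hdet).smul (neg_pos.mpr (inv_lt_zero.mpr hneg))
  refine ⟨_, isHermitian_iff_isSymm.mp hP.isHermitian, hP, ?_⟩
  rw [Matrix.mul_smul, Matrix.smul_mul, ← smul_add, transpose_mul_lyapunovFinTwo_add, smul_smul,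
    neg_mul, inv_mul_cancel₀ hneg.ne, neg_one_smul]

end Matrix

/-- For each λ ∈ [0,1] there exists a symmetric positive definite P with
A(λ)ᵀ P + P A(λ) = −I, where A(λ) = λA₁ + (1−λ)A₂. -/
theorem lyapunov_equation_A_lambda :
    ∀ l ∈ Set.Icc (0:ℝ) 1,
      ∃ P : Matrix (Fin 2) (Fin 2) ℝ, P.IsSymm ∧ P.PosDef ∧
        (l • !![(0:ℝ), 2; -(1/2), -(1/10)] + (1 - l) • !![(-(1/10):ℝ), 1/2; -2, 0])ᵀ * P
          + P * (l • !![(0:ℝ), 2; -(1/2), -(1/10)] + (1 - l) • !![(-(1/10):ℝ), 1/2; -2, 0])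
          = -1 := by
  rintro l ⟨hl₀, hl₁⟩
  have hA : l • !![(0:ℝ), 2; -(1/2), -(1/10)] + (1 - l) • !![(-(1/10):ℝ), 1/2; -2, 0]
      = !![-(1 - l) / 10, 2 * l + (1 - l) / 2; -(l / 2 + 2 * (1 - l)), -l / 10] := by
    ext i j
    fin_cases i <;> fin_cases j <;> simp <;> ring
  rw [hA]
  apply exists_posDef_transpose_mul_add_mul_eq_neg_one_of_trace_neg_of_det_pos
  · rw [trace_fin_two_of]
    linarith
  · rw [det_fin_two_of]
    nlinarith [mul_nonneg hl₀ (sub_nonneg.mpr hl₁)]
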